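/- arXiv:1807.00508 — 8 statements merged into one kernel-verified Lean document; each statement's English description precedes it below -/
import Mathlib

section
/- For every real x ≥ 101, the sum over all prime powers p^h with h ≥ 2 and p^h ≥ x² of p^{-h} is at most 4.02·1.25506/(x·log x). -/
/-!
Split the prime powers according to whether `p ≤ x` or `p > x`. For `p ≤ x` the admissible
exponents form a geometric tail starting at some `p ^ m ≥ x²`, worth at most `2 / x²`, and there
are at most `π(x) ≤ c x / log x` such primes. For `p > x` the tail is
`∑_{h ≥ 2} p⁻ʰ = 1 / (p (p - 1))`; partial summation against `π(n) ≤ c n / log x` bounds the sum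
of these over `p > x` by `c / log x · (1 / (x - 1) + 1 / x)`, because `n (w n - w (n + 1))`
telescopes for `w n = 1 / (n (n - 1))`.
-/

open scoped Classical

/-- The prime counting function: number of primes `p ≤ x`. -/
noncomputable def primePi (x : ℝ) : ℕ :=
  ((Finset.range (Nat.floor x + 1)).filter (fun p => p.Prime)).card

open Finset

noncomputable def primePowerTerm (x : ℝ) (q : ℕ × ℕ) : ℝ :=
  if q.1.Prime ∧ 2 ≤ q.2 ∧ x ^ 2 ≤ (q.1 : ℝ) ^ q.2 then ((q.1 : ℝ) ^ q.2)⁻¹ else 0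

section GeometricTails

variable {K : Type*} [Field K] [LinearOrder K] [IsStrictOrderedRing K]

lemma sum_pow_le_pow_div_one_sub {r : K} (hr₀ : 0 ≤ r) (hr₁ : r < 1) {m : ℕ} {F : Finset ℕ}
    (hF : ∀ h ∈ F, m ≤ h) : ∑ h ∈ F, r ^ h ≤ r ^ m / (1 - r) :=
  calc ∑ h ∈ F, r ^ h ≤ ∑ h ∈ Ico m (F.sup id + 1), r ^ h :=
        sum_le_sum_of_subset_of_nonneg
          (fun h hh => mem_Ico.2 ⟨hF h hh, Nat.lt_succ_of_le (le_sup (f := id) hh)⟩)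
          fun _ _ _ => pow_nonneg hr₀ _
    _ ≤ r ^ m / (1 - r) := geom_sum_Ico_le_of_lt_one hr₀ hr₁

lemma sum_inv_pow_le_two_div {p y : K} (hp : 2 ≤ p) (hy : 0 < y) {F : Finset ℕ}
    (hF : ∀ h ∈ F, y ≤ p ^ h) : ∑ h ∈ F, (p ^ h)⁻¹ ≤ 2 / y := by
  rcases F.eq_empty_or_nonempty with rfl | hne
  · simp only [sum_empty]; positivity
  have hp₀ : 0 < p := by linarith
  have hhalf : 1 / 2 ≤ 1 - p⁻¹ := by
    linarith [inv_anti₀ (two_pos : (0 : K) < 2) hp, inv_eq_one_div (2 : K)]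
  have hmin : y ≤ p ^ F.min' hne := hF _ (F.min'_mem hne)
  simp only [← inv_pow]
  calc ∑ h ∈ F, p⁻¹ ^ h ≤ p⁻¹ ^ F.min' hne / (1 - p⁻¹) :=
        sum_pow_le_pow_div_one_sub (by positivity) (inv_lt_one_of_one_lt₀ (by linarith))
          fun h hh => F.min'_le h hh
    _ ≤ y⁻¹ / (1 / 2) := by
        rw [inv_pow]
        gcongr
    _ = 2 / y := by ring

lemma sum_inv_pow_le_inv_mul_sub_one {p : K} (hp : 1 < p) {F : Finset ℕ} (hF : ∀ h ∈ F, 2 ≤ h) :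
    ∑ h ∈ F, (p ^ h)⁻¹ ≤ (p * (p - 1))⁻¹ := by
  simp only [← inv_pow]
  calc ∑ h ∈ F, p⁻¹ ^ h ≤ p⁻¹ ^ 2 / (1 - p⁻¹) :=
        sum_pow_le_pow_div_one_sub (by positivity) (inv_lt_one_of_one_lt₀ hp) hF
    _ = (p * (p - 1))⁻¹ := by
        have : p - 1 ≠ 0 := by linarith
        field_simp

end GeometricTails

lemma sum_primePowerTerm_fst_le {x : ℝ} (hx : 0 < x) (p : ℕ) (B : Finset ℕ) :
    ∑ h ∈ B, primePowerTerm x (p, h) ≤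
      (if p.Prime ∧ (p : ℝ) ≤ x then 2 / x ^ 2 else 0) +
        (if p.Prime ∧ x < p then ((p : ℝ) * (p - 1))⁻¹ else 0) := by
  simp only [primePowerTerm, ← sum_filter]
  by_cases hp : p.Prime
  · have hp₂ : (2 : ℝ) ≤ p := by exact_mod_cast hp.two_le
    rcases le_or_gt (p : ℝ) x with hpx | hxp
    · simp only [hp, hpx, true_and, not_lt.2 hpx, and_false, if_true, if_false, add_zero]
      exact sum_inv_pow_le_two_div hp₂ (by positivity) fun h hh => (mem_filter.1 hh).2.2
    · simp only [hp, hxp, not_le.2 hxp, true_and, and_false, if_true, if_false, zero_add]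
      exact sum_inv_pow_le_inv_mul_sub_one (by linarith) fun h hh => (mem_filter.1 hh).2.1
  · simp [hp]

lemma card_le_primePi {S : Finset ℕ} {t : ℝ} (hS : ∀ p ∈ S, p.Prime ∧ (p : ℝ) ≤ t) :
    #S ≤ primePi t :=
  card_le_card fun p hp => mem_filter.2
    ⟨mem_range.2 (Nat.lt_succ_of_le (Nat.le_floor (hS p hp).2)), (hS p hp).1⟩

lemma sum_eq_sum_Ico_card_filter_le_smul_sub {M : Type*} [AddCommGroup M] {S : Finset ℕ}
    {a b : ℕ} (hS : ∀ p ∈ S, a ≤ p ∧ p ≤ b) (w : ℕ → M) :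
    ∑ p ∈ S, w p = ∑ n ∈ Ico a b, #(S.filter (· ≤ n)) • (w n - w (n + 1)) + #S • w b := by
  have telescope : ∀ p ∈ S, w p = ∑ n ∈ Ico a b, (if p ≤ n then w n - w (n + 1) else 0) + w b := by
    intro p hp
    have hIco : (Ico a b).filter (p ≤ ·) = Ico p b := by
      ext n
      simp only [mem_filter, mem_Ico]
      have := hS p hp
      omega
    have := sum_Ico_sub (fun n => -w n) (hS p hp).2
    simp only [sub_neg_eq_add, neg_add_eq_sub] at this
    rw [← sum_filter, hIco, this, sub_add_cancel]
  rw [sum_congr rfl telescope, sum_add_distrib, sum_comm, sum_const]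
  simp only [← sum_filter, sum_const]

lemma inv_mul_sub_one_sub_inv_succ_mul {n : ℝ} (hn : 1 < n) :
    (n * (n - 1))⁻¹ - ((n + 1) * n)⁻¹ = 2 / ((n - 1) * n * (n + 1)) := by
  have : n - 1 ≠ 0 := by linarith
  have : n ≠ 0 := by linarith
  field_simp
  ring

lemma sum_inv_mul_sub_one_le_of_card_filter_le {S : Finset ℕ} {N : ℕ} (hN : 1 ≤ N) {K : ℝ}
    (hS : ∀ p ∈ S, N < p) (hcount : ∀ n, N < n → (#(S.filter (· ≤ n)) : ℝ) ≤ K * n) :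
    ∑ p ∈ S, ((p : ℝ) * (p - 1))⁻¹ ≤ K * ((N : ℝ)⁻¹ + ((N : ℝ) + 1)⁻¹) := by
  set w : ℕ → ℝ := fun n => ((n : ℝ) * (n - 1))⁻¹
  set u : ℕ → ℝ := fun n => ((n : ℝ) - 1)⁻¹ + (n : ℝ)⁻¹
  set b := N + 1 + S.sup id
  have hK : 0 ≤ K := by
    have := (Nat.cast_nonneg _).trans (hcount (N + 1) (Nat.lt_succ_self N))
    exact nonneg_of_mul_nonneg_left this (by positivity)
  have hb : N < b := by omega
  have hSb : S.filter (· ≤ b) = S :=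
    filter_true_of_mem fun p hp => (le_sup (f := id) hp).trans (by omega)
  have hstep : ∀ n ∈ Ico (N + 1) b,
      #(S.filter (· ≤ n)) • (w n - w (n + 1)) ≤ K * (u n - u (n + 1)) := by
    intro n hn
    have hn₁ : (1 : ℝ) < n := by
      have := (mem_Ico.1 hn).1
      exact_mod_cast (by omega : 1 < n)
    have hdiff : w n - w (n + 1) = 2 / ((n - 1) * n * (n + 1)) := by
      simp only [w]; push_cast
      rw [add_sub_cancel_right]
      exact inv_mul_sub_one_sub_inv_succ_mul hn₁
    have hu : u n - u (n + 1) = n * (w n - w (n + 1)) := by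
      rw [hdiff]; simp only [u]; push_cast
      have : (n : ℝ) - 1 ≠ 0 := by linarith
      rw [add_sub_cancel_right]
      field_simp; ring
    rw [nsmul_eq_mul, hu, ← mul_assoc]
    refine mul_le_mul_of_nonneg_right (hcount n (mem_Ico.1 hn).1) ?_
    rw [hdiff]
    have : 0 < (n : ℝ) - 1 := by linarith
    positivity
  have hlast : #S • w b ≤ K * u b := by
    have hb₂ : (2 : ℝ) ≤ b := by exact_mod_cast (by omega : 2 ≤ b)
    have hwb : 0 ≤ w b := by
      have : 0 < (b : ℝ) - 1 := by linarith
      simp only [w]; positivity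
    have hcard : (#S : ℝ) ≤ K * b := by simpa only [hSb] using hcount b hb
    calc #S • w b ≤ K * b * w b := by
          rw [nsmul_eq_mul]; exact mul_le_mul_of_nonneg_right hcard hwb
      _ = K * ((b : ℝ) - 1)⁻¹ := by
          simp only [w]
          have : (b : ℝ) - 1 ≠ 0 := by linarith
          field_simp
      _ ≤ K * u b := mul_le_mul_of_nonneg_left (le_add_of_nonneg_right (by positivity)) hK
  have htele : ∑ n ∈ Ico (N + 1) b, (u n - u (n + 1)) = u (N + 1) - u b := by
    have := sum_Ico_sub (fun n => -u n) (by omega : N + 1 ≤ b)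
    simpa only [neg_sub_neg, sub_neg_eq_add, neg_add_eq_sub] using this
  calc ∑ p ∈ S, w p
      = ∑ n ∈ Ico (N + 1) b, #(S.filter (· ≤ n)) • (w n - w (n + 1)) + #S • w b :=
        sum_eq_sum_Ico_card_filter_le_smul_sub
          (fun p hp => ⟨hS p hp, (le_sup (f := id) hp).trans (by omega)⟩) w
    _ ≤ ∑ n ∈ Ico (N + 1) b, K * (u n - u (n + 1)) + K * u b := add_le_add (sum_le_sum hstep) hlast
    _ = K * u (N + 1) := by rw [← mul_sum, htele]; ring
    _ = K * ((N : ℝ)⁻¹ + ((N : ℝ) + 1)⁻¹) := by simp only [u]; push_cast; ring_nf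

lemma sum_inv_mul_sub_one_le_of_primePi_le {c : ℝ} (hc : 0 ≤ c)
    (hπ : ∀ t : ℝ, 1 < t → (primePi t : ℝ) ≤ c * t / Real.log t) {x : ℝ} (hx : 1 < x)
    {S : Finset ℕ} (hS : ∀ p ∈ S, p.Prime ∧ x < p) :
    ∑ p ∈ S, ((p : ℝ) * (p - 1))⁻¹ ≤ c / Real.log x * ((x - 1)⁻¹ + x⁻¹) := by
  have hx₀ : 0 ≤ x := by linarith
  have hlog : 0 < Real.log x := Real.log_pos hx
  have hN : 1 ≤ ⌊x⌋₊ := Nat.le_floor (by exact_mod_cast hx.le)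
  have hcount : ∀ n : ℕ, ⌊x⌋₊ < n → (#(S.filter (· ≤ n)) : ℝ) ≤ c / Real.log x * n := by
    intro n hn
    have hxn : x < n := (Nat.floor_lt hx₀).1 hn
    have hcard : #(S.filter (· ≤ n)) ≤ primePi n := card_le_primePi fun p hp => by
      obtain ⟨hpS, hpn⟩ := mem_filter.1 hp
      exact ⟨(hS p hpS).1, by exact_mod_cast hpn⟩
    calc (#(S.filter (· ≤ n)) : ℝ) ≤ primePi n := by exact_mod_cast hcard
      _ ≤ c * n / Real.log n := hπ n (hx.trans hxn)
      _ ≤ c * n / Real.log x := by gcongr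
      _ = c / Real.log x * n := by ring
  have hfloor : ((⌊x⌋₊ : ℝ))⁻¹ + ((⌊x⌋₊ : ℝ) + 1)⁻¹ ≤ (x - 1)⁻¹ + x⁻¹ := by
    have h₁ : 0 < x - 1 := by linarith
    gcongr
    · exact (Nat.sub_one_lt_floor x).le
    · exact (Nat.lt_floor_add_one x).le
  calc ∑ p ∈ S, ((p : ℝ) * (p - 1))⁻¹
      ≤ c / Real.log x * ((⌊x⌋₊ : ℝ)⁻¹ + ((⌊x⌋₊ : ℝ) + 1)⁻¹) :=
        sum_inv_mul_sub_one_le_of_card_filter_le hN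
          (fun p hp => (Nat.floor_lt hx₀).2 (hS p hp).2) hcount
    _ ≤ c / Real.log x * ((x - 1)⁻¹ + x⁻¹) := by gcongr

lemma sum_primePowerTerm_le_of_primePi_le {c : ℝ} (hc : 0 ≤ c)
    (hπ : ∀ t : ℝ, 1 < t → (primePi t : ℝ) ≤ c * t / Real.log t) {x : ℝ} (hx : 1 < x)
    (s : Finset (ℕ × ℕ)) :
    ∑ q ∈ s, primePowerTerm x q ≤
      c * x / Real.log x * (2 / x ^ 2) + c / Real.log x * ((x - 1)⁻¹ + x⁻¹) := by
  set A := s.image Prod.fst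
  set B := s.image Prod.snd
  have hsmall : (#(A.filter fun p : ℕ => p.Prime ∧ (p : ℝ) ≤ x) : ℝ) ≤ c * x / Real.log x :=
    (Nat.cast_le.2 (card_le_primePi fun p hp => (mem_filter.1 hp).2)).trans (hπ x hx)
  have hlarge := sum_inv_mul_sub_one_le_of_primePi_le hc hπ hx
    (S := A.filter fun p : ℕ => p.Prime ∧ x < p) fun p hp => (mem_filter.1 hp).2
  calc ∑ q ∈ s, primePowerTerm x q
      ≤ ∑ q ∈ A ×ˢ B, primePowerTerm x q :=
        sum_le_sum_of_subset_of_nonneg (fun q hq => mem_product.2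
          ⟨mem_image_of_mem _ hq, mem_image_of_mem _ hq⟩) fun q _ _ => by
            unfold primePowerTerm; positivity
    _ = ∑ p ∈ A, ∑ h ∈ B, primePowerTerm x (p, h) := sum_product _ _ _
    _ ≤ ∑ p ∈ A, ((if p.Prime ∧ (p : ℝ) ≤ x then 2 / x ^ 2 else 0) +
          (if p.Prime ∧ x < p then ((p : ℝ) * (p - 1))⁻¹ else 0)) :=
        sum_le_sum fun p _ => sum_primePowerTerm_fst_le (by positivity) p B
    _ = #(A.filter fun p : ℕ => p.Prime ∧ (p : ℝ) ≤ x) * (2 / x ^ 2) +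
          ∑ p ∈ A.filter (fun p : ℕ => p.Prime ∧ x < p), ((p : ℝ) * (p - 1))⁻¹ := by
        rw [sum_add_distrib, ← sum_filter, ← sum_filter, sum_const, nsmul_eq_mul]
    _ ≤ c * x / Real.log x * (2 / x ^ 2) + c / Real.log x * ((x - 1)⁻¹ + x⁻¹) := by
        gcongr

theorem stmt1
    (hπ : ∀ t : ℝ, 1 < t → (primePi t : ℝ) < 1.25506 * t / Real.log t) :
    ∀ x : ℝ, 101 ≤ x →
      (∑' q : ℕ × ℕ, if q.1.Prime ∧ 2 ≤ q.2 ∧ x ^ 2 ≤ (q.1 : ℝ) ^ q.2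
        then ((q.1 : ℝ) ^ q.2)⁻¹ else 0)
      ≤ 4.02 * 1.25506 / (x * Real.log x) := by
  intro x hx
  have hx₁ : 1 < x := by linarith
  have hlog : 0 < Real.log x := Real.log_pos hx₁
  -- `1 / (x - 1) ≤ 1.01 / x` is where `x ≥ 101` enters.
  have hinv : (x - 1)⁻¹ + x⁻¹ ≤ 2.02 / x := by
    rw [inv_eq_one_div, inv_eq_one_div, div_add_div _ _ (by linarith) (by linarith),
      div_le_div_iff₀ (by nlinarith) (by linarith)]
    nlinarith
  change ∑' q, primePowerTerm x q ≤ _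
  refine tsum_le_of_sum_le' (by positivity) fun s => ?_
  calc ∑ q ∈ s, primePowerTerm x q
      ≤ 1.25506 * x / Real.log x * (2 / x ^ 2) + 1.25506 / Real.log x * ((x - 1)⁻¹ + x⁻¹) :=
        sum_primePowerTerm_le_of_primePi_le (by norm_num) (fun t ht => (hπ t ht).le) hx₁ s
    _ ≤ 1.25506 * x / Real.log x * (2 / x ^ 2) + 1.25506 / Real.log x * (2.02 / x) := by
        gcongr
    _ = 4.02 * 1.25506 / (x * Real.log x) := by
        field_simp
        ring
end

section
/- For every real x > x₀ ≥ e (in particular x ≥ 101), one has ∑_{p > x} p^{-2} ≤ 2·1.25506/(x·log x), where the sum is over primes p > x. -/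
/-!
Let `A = 1.25506`, `T` a finite set of primes exceeding `x`, and `N = ⌊x⌋₊ + 1`. Summation by
parts gives `∑_{p ∈ T} p⁻² = ∑_n #{p ∈ T | p ≤ n} (n⁻² - (n+1)⁻²)`. Only `n ≥ N` contribute,
and for them the count is at most `π(n) < A n / log n ≤ A n / log x`. Since
`n (n⁻² - (n+1)⁻²) ≤ 2 (n⁻¹ - (n+1)⁻¹)`, the sum is dominated by the telescoping series
`(2A / log x) ∑_{n ≥ N} (n⁻¹ - (n+1)⁻¹) = 2A / (N log x) ≤ 2A / (x log x)`.
-/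

open scoped Classical

open Filter Finset Topology

lemma hasSum_sub_succ_of_antitone {g : ℕ → ℝ} {l : ℝ} (hg : Antitone g)
    (hl : Tendsto g atTop (𝓝 l)) : HasSum (fun n => g n - g (n + 1)) (g 0 - l) := by
  rw [hasSum_iff_tendsto_nat_of_nonneg fun n => sub_nonneg.2 (hg n.le_succ)]
  simpa only [sum_range_sub'] using tendsto_const_nhds.sub hl

lemma hasSum_ite_sub_succ {f : ℕ → ℝ} {N : ℕ} {l : ℝ} (hf : AntitoneOn f (Set.Ici N))
    (hl : Tendsto f atTop (𝓝 l)) :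
    HasSum (fun n => if N ≤ n then f n - f (n + 1) else 0) (f N - l) := by
  rw [← hasSum_nat_add_iff' N]
  have hshift := hasSum_sub_succ_of_antitone (g := fun k => f (k + N))
    (fun a b hab => hf (by simp) (by simp) (by omega)) ((tendsto_add_atTop_iff_nat N).2 hl)
  simpa [add_right_comm _ 1 N, sum_ite_of_false] using hshift

lemma hasSum_card_filter_le_mul_sub {f : ℕ → ℝ} {N : ℕ} (hf : AntitoneOn f (Set.Ici N))
    (h0 : Tendsto f atTop (𝓝 0)) {T : Finset ℕ} (hT : ∀ p ∈ T, N ≤ p) :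
    HasSum (fun n => (#(T.filter (· ≤ n)) : ℝ) * (f n - f (n + 1))) (∑ p ∈ T, f p) := by
  have hp : ∀ p ∈ T, HasSum (fun n => if p ≤ n then f n - f (n + 1) else 0) (f p) := fun p hp' =>
    by simpa using hasSum_ite_sub_succ (hf.mono (Set.Ici_subset_Ici.2 (hT p hp'))) h0
  convert hasSum_sum hp using 2 with n
  rw [← sum_filter, sum_const, nsmul_eq_mul]

lemma mul_inv_sq_sub_inv_sq_succ_le {x : ℝ} (hx : 0 < x) :
    x * ((x ^ 2)⁻¹ - ((x + 1) ^ 2)⁻¹) ≤ 2 * (x⁻¹ - (x + 1)⁻¹) := by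
  rw [← sub_nonneg]
  have key : 2 * (x⁻¹ - (x + 1)⁻¹) - x * ((x ^ 2)⁻¹ - ((x + 1) ^ 2)⁻¹) = (x * (x + 1) ^ 2)⁻¹ := by
    field_simp
    ring
  rw [key]
  positivity

lemma antitoneOn_natCast_inv : AntitoneOn (fun n : ℕ => (n : ℝ)⁻¹) (Set.Ici 1) :=
  fun a ha _ _ hab => inv_anti₀ (Nat.cast_pos.2 ha) (by gcongr)

lemma antitoneOn_natCast_inv_sq : AntitoneOn (fun n : ℕ => ((n : ℝ) ^ 2)⁻¹) (Set.Ici 1) :=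
  fun a ha _ _ hab => inv_anti₀ (pow_pos (Nat.cast_pos.2 ha) 2) (by gcongr)

lemma sum_inv_sq_le_of_card_filter_le {T : Finset ℕ} {N : ℕ} (hN : 0 < N) (hT : ∀ p ∈ T, N ≤ p)
    {C : ℝ} (hC : ∀ n, N ≤ n → (#(T.filter (· ≤ n)) : ℝ) ≤ C * n) :
    ∑ p ∈ T, ((p : ℝ) ^ 2)⁻¹ ≤ 2 * C / N := by
  have hC0 : 0 ≤ C := nonneg_of_mul_nonneg_left ((Nat.cast_nonneg _).trans (hC N le_rfl))
    (by exact_mod_cast hN)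
  have habel := hasSum_card_filter_le_mul_sub
    (antitoneOn_natCast_inv_sq.mono (Set.Ici_subset_Ici.2 hN)) (tendsto_inv_atTop_zero.comp
      ((tendsto_pow_atTop two_ne_zero).comp tendsto_natCast_atTop_atTop)) hT
  have htel := (hasSum_ite_sub_succ (antitoneOn_natCast_inv.mono (Set.Ici_subset_Ici.2 hN))
    (tendsto_inv_atTop_nhds_zero_nat (𝕜 := ℝ))).mul_left (2 * C)
  rw [sub_zero, ← div_eq_mul_inv] at htel
  refine hasSum_le (fun n => ?_) habel htel
  split_ifs with hn
  · have hn0 : (0 : ℝ) < n := by exact_mod_cast hN.trans_le hn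
    have hdiff : 0 ≤ ((n : ℝ) ^ 2)⁻¹ - (((n : ℝ) + 1) ^ 2)⁻¹ :=
      sub_nonneg.2 (inv_anti₀ (by positivity) (by gcongr; linarith))
    push_cast
    calc (#(T.filter (· ≤ n)) : ℝ) * (((n : ℝ) ^ 2)⁻¹ - ((n + 1 : ℝ) ^ 2)⁻¹)
        ≤ C * (n * (((n : ℝ) ^ 2)⁻¹ - ((n + 1 : ℝ) ^ 2)⁻¹)) := by
          rw [← mul_assoc]
          exact mul_le_mul_of_nonneg_right (hC n hn) hdiff
      _ ≤ C * (2 * ((n : ℝ)⁻¹ - (n + 1 : ℝ)⁻¹)) :=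
          mul_le_mul_of_nonneg_left (mul_inv_sq_sub_inv_sq_succ_le hn0) hC0
      _ = 2 * C * ((n : ℝ)⁻¹ - (n + 1 : ℝ)⁻¹) := by ring
  · rw [mul_zero, filter_false_of_mem fun p hp => by have := hT p hp; omega]
    simp

lemma card_filter_le_primePi {T : Finset ℕ} (hT : ∀ p ∈ T, p.Prime) (n : ℕ) :
    #(T.filter (· ≤ n)) ≤ primePi n := by
  refine card_le_card fun p hp => ?_
  rw [mem_filter] at hp
  rw [mem_filter, mem_range, Nat.floor_natCast]
  exact ⟨Nat.lt_succ_of_le hp.2, hT p hp.1⟩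

theorem stmt2
    (hπ : ∀ t : ℝ, 1 < t → (primePi t : ℝ) < 1.25506 * t / Real.log t) :
    ∀ x : ℝ, 101 ≤ x →
      (∑' p : ℕ, if p.Prime ∧ x < (p : ℝ) then ((p : ℝ) ^ 2)⁻¹ else 0)
      ≤ 2 * 1.25506 / (x * Real.log x) := by
  intro x hx
  have hlog : 0 < Real.log x := Real.log_pos (by linarith)
  set N := ⌊x⌋₊ + 1
  have hxN : x < N := by simpa [N] using Nat.lt_floor_add_one x
  have hgt : ∀ p : ℕ, x < p → N ≤ p := fun p hp => Nat.floor_lt (by linarith) |>.2 hp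
  refine Real.tsum_le_of_sum_range_le (fun p => by positivity) fun K => ?_
  rw [← sum_filter]
  set T := (range K).filter fun p : ℕ => p.Prime ∧ x < p
  have hcount : ∀ n, N ≤ n → (#(T.filter (· ≤ n)) : ℝ) ≤ 1.25506 / Real.log x * n := by
    intro n hn
    have hxn : x < n := hxN.trans_le (by exact_mod_cast hn)
    calc (#(T.filter (· ≤ n)) : ℝ) ≤ primePi n :=
          mod_cast card_filter_le_primePi (T := T) (fun p hp => (mem_filter.1 hp).2.1) n
      _ ≤ 1.25506 * n / Real.log n := (hπ n (by linarith)).le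
      _ ≤ 1.25506 * n / Real.log x := by gcongr
      _ = 1.25506 / Real.log x * n := by ring
  calc ∑ p ∈ T, ((p : ℝ) ^ 2)⁻¹ ≤ 2 * (1.25506 / Real.log x) / N :=
        sum_inv_sq_le_of_card_filter_le (T := T) (Nat.succ_pos _)
          (fun p hp => hgt p (mem_filter.1 hp).2.2) hcount
    _ ≤ 2 * (1.25506 / Real.log x) / x := by gcongr
    _ = 2 * 1.25506 / (x * Real.log x) := by field_simp
end

section
/- Let y > x > 1 and let k₀(s) = ((y^{s-1} − x^{s-1})/(s−1))². For x ≥ 2 and k₁(s) = k₀(s; x, x²), the inverse Mellin transform of k₁, namely (1/(2πi))∫_{a−i∞}^{a+i∞} k₁(s) u^{−s} ds for a > −1/2, equals u^{−1} log(x⁴/u) if x³ ≤ u ≤ x⁴, equals u^{−1} log(u/x²) if x² ≤ u ≤ x³, and equals 0 otherwise. -/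
/-!
Let `L = log x` and let `tent L` be the triangle of height `L` over `[2L, 4L]`, the convolution
square of the indicator of `[L, 2L]`. The right-hand side is `f u = u⁻¹ · tent L (log u)`.
Under `u = eᵛ` the Mellin transform of `f` at `s` becomes the Laplace transform of `tent L` at
`s - 1`, i.e. the square of the Laplace transform `(e^{2L(s-1)} - e^{L(s-1)}) / (s - 1)` of the
indicator, which is `k₁(s)`. On a vertical line it is bounded and `O(1 / (Im s)²)`, hence
integrable, and Mellin inversion recovers `f`.
-/

open Complex MeasureTheory Set

section MellinExp

variable {E : Type*} [NormedAddCommGroup E] [NormedSpace ℂ E]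

lemma abs_exp_smul_ofReal_exp_cpow_smul (v : ℝ) (s : ℂ) (e : E) :
    |Real.exp v| • ((Real.exp v : ℂ) ^ (s - 1) • e) = cexp (s * v) • e := by
  rw [abs_of_pos (Real.exp_pos v), ← smul_assoc, Complex.cpow_def_of_ne_zero (by simp),
    ← ofReal_log (Real.exp_pos v).le, Real.log_exp, real_smul, ofReal_exp, ← Complex.exp_add]
  ring_nf

theorem mellin_eq_integral_exp_smul (f : ℝ → E) (s : ℂ) :
    mellin f s = ∫ v : ℝ, cexp (s * v) • f (Real.exp v) := by
  rw [mellin, ← Real.range_exp, ← image_univ, integral_image_eq_integral_abs_deriv_smul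
    MeasurableSet.univ (fun v _ ↦ (Real.hasDerivAt_exp v).hasDerivWithinAt)
    Real.exp_injective.injOn, setIntegral_univ]
  simp_rw [abs_exp_smul_ofReal_exp_cpow_smul]

theorem mellinConvergent_iff_integrable_exp_smul (f : ℝ → E) (s : ℂ) :
    MellinConvergent f s ↔ Integrable fun v : ℝ ↦ cexp (s * v) • f (Real.exp v) := by
  rw [MellinConvergent, ← Real.range_exp, ← image_univ,
    integrableOn_image_iff_integrableOn_abs_deriv_smul MeasurableSet.univ
      (fun v _ ↦ (Real.hasDerivAt_exp v).hasDerivWithinAt) Real.exp_injective.injOn,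
    integrableOn_univ]
  simp_rw [abs_exp_smul_ofReal_exp_cpow_smul]

end MellinExp

lemma integrable_of_norm_le_of_norm_le_div_sq {E : Type*} [NormedAddCommGroup E] {f : ℝ → E}
    (hf : AEStronglyMeasurable f) {B C : ℝ} (hB : ∀ y, ‖f y‖ ≤ B)
    (hC : ∀ y ≠ 0, ‖f y‖ ≤ C / y ^ 2) :
    Integrable f := by
  have hC₀ : 0 ≤ C := by simpa using (norm_nonneg _).trans (hC 1 one_ne_zero)
  refine (integrable_inv_one_add_sq.const_mul (B + C)).mono' hf (ae_of_all _ fun y ↦ ?_)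
  rw [← div_eq_mul_inv, le_div_iff₀ (by positivity)]
  rcases eq_or_ne y 0 with rfl | hy
  · simpa using (hB 0).trans (le_add_of_nonneg_right hC₀)
  · have := (le_div_iff₀ (by positivity)).1 (hC y hy)
    nlinarith [hB y]

noncomputable def tent (L v : ℝ) : ℝ := max 0 (min (v - 2 * L) (4 * L - v))

lemma tent_of_mem_Icc_left {L v : ℝ} (hv : v ∈ Icc (2 * L) (3 * L)) : tent L v = v - 2 * L := by
  rw [tent, min_eq_left (by linarith [hv.2]), max_eq_right (by linarith [hv.1])]

lemma tent_of_mem_Icc_right {L v : ℝ} (hv : v ∈ Icc (3 * L) (4 * L)) : tent L v = 4 * L - v := by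
  rw [tent, min_eq_right (by linarith [hv.1]), max_eq_right (by linarith [hv.2])]

lemma tent_eq_zero_of_notMem {L v : ℝ} (hv : v ∉ Icc (2 * L) (4 * L)) : tent L v = 0 := by
  rw [mem_Icc, not_and_or, not_le, not_le] at hv
  refine max_eq_left ?_
  rcases hv with hv | hv
  · linarith [min_le_left (v - 2 * L) (4 * L - v)]
  · linarith [min_le_right (v - 2 * L) (4 * L - v)]

lemma tent_eq_ite (L v : ℝ) :
    tent L v = if 3 * L ≤ v ∧ v ≤ 4 * L then 4 * L - v
      else if 2 * L ≤ v ∧ v ≤ 3 * L then v - 2 * L else 0 := by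
  split_ifs with h₁ h₂
  · exact tent_of_mem_Icc_right h₁
  · exact tent_of_mem_Icc_left h₂
  · refine tent_eq_zero_of_notMem fun hv ↦ ?_
    rcases le_total v (3 * L) with h | h
    exacts [h₂ ⟨hv.1, h⟩, h₁ ⟨h, hv.2⟩]

@[fun_prop]
lemma continuous_tent (L : ℝ) : Continuous (tent L) := by
  unfold tent
  fun_prop

lemma integrable_tent_mul_exp (L : ℝ) (c : ℂ) :
    Integrable fun v : ℝ ↦ (tent L v : ℂ) * cexp (c * v) := by
  refine Continuous.integrable_of_hasCompactSupport (by fun_prop) ?_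
  refine HasCompactSupport.intro (K := Icc (2 * L) (4 * L)) isCompact_Icc fun v hv ↦ ?_
  rw [tent_eq_zero_of_notMem hv, ofReal_zero, zero_mul]

lemma hasDerivAt_exp_mul_mul_sub (c : ℂ) (hc : c ≠ 0) (b v : ℝ) :
    HasDerivAt (fun v : ℝ ↦ cexp (c * v) * ((v - b) / c - 1 / c ^ 2))
      (cexp (c * v) * (v - b)) v := by
  have hv : HasDerivAt (fun v : ℝ ↦ (v : ℂ)) 1 v := (hasDerivAt_id (v : ℂ)).comp_ofReal
  refine ((hv.const_mul c).cexp.fun_mul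
    (((hv.sub_const (b : ℂ)).div_const c).sub_const (1 / c ^ 2))).congr_deriv ?_
  field_simp
  ring

lemma integral_exp_mul_mul_sub (c : ℂ) (hc : c ≠ 0) (b p q : ℝ) :
    ∫ v in p..q, cexp (c * v) * (v - b) =
      cexp (c * q) * ((q - b) / c - 1 / c ^ 2) - cexp (c * p) * ((p - b) / c - 1 / c ^ 2) :=
  intervalIntegral.integral_eq_sub_of_hasDerivAt
    (fun v _ ↦ hasDerivAt_exp_mul_mul_sub c hc b v)
    ((by fun_prop : Continuous _).intervalIntegrable _ _)

theorem integral_tent_mul_exp {L : ℝ} (hL : 0 ≤ L) {c : ℂ} (hc : c ≠ 0) :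
    ∫ v : ℝ, (tent L v : ℂ) * cexp (c * v) = ((cexp (2 * L * c) - cexp (L * c)) / c) ^ 2 := by
  have hsplit : ∫ v : ℝ, (tent L v : ℂ) * cexp (c * v) =
      (∫ v in (2 * L)..(3 * L), cexp (c * v) * (v - (2 * L : ℝ))) -
        ∫ v in (3 * L)..(4 * L), cexp (c * v) * (v - (4 * L : ℝ)) := by
    rw [← setIntegral_eq_integral_of_forall_compl_eq_zero (s := Icc (2 * L) (4 * L))
        fun v hv ↦ by rw [tent_eq_zero_of_notMem hv, ofReal_zero, zero_mul],
      integral_Icc_eq_integral_Ioc, ← intervalIntegral.integral_of_le (by linarith),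
      ← intervalIntegral.integral_add_adjacent_intervals (b := 3 * L)
        ((by fun_prop : Continuous _).intervalIntegrable _ _)
        ((by fun_prop : Continuous _).intervalIntegrable _ _),
      sub_eq_add_neg, ← intervalIntegral.integral_neg]
    congr 1 <;> refine intervalIntegral.integral_congr fun v hv ↦ ?_
    · rw [uIcc_of_le (by linarith)] at hv
      simp only [tent_of_mem_Icc_left hv]
      push_cast
      ring
    · rw [uIcc_of_le (by linarith)] at hv
      simp only [tent_of_mem_Icc_right hv]
      push_cast
      ring
  have hpow (n : ℕ) : cexp (c * (n * L)) = cexp (L * c) ^ n := by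
    rw [← Complex.exp_nat_mul]
    ring_nf
  rw [hsplit, integral_exp_mul_mul_sub c hc, integral_exp_mul_mul_sub c hc]
  push_cast
  rw [show (2 : ℂ) * L * c = c * (2 * L) by ring]
  simp only [← Nat.cast_ofNat (R := ℂ), hpow]
  field_simp
  ring

lemma norm_exp_mul_ofReal (s : ℂ) (v : ℝ) : ‖cexp (s * v)‖ = Real.exp (s.re * v) := by
  simp [Complex.norm_exp]

lemma continuous_integral_tent_mul_exp (L σ : ℝ) :
    Continuous fun y : ℝ ↦ ∫ v : ℝ, (tent L v : ℂ) * cexp ((σ + y * I) * v) := by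
  refine continuous_of_dominated (fun y ↦ (integrable_tent_mul_exp L _).aestronglyMeasurable)
    (fun y ↦ ae_of_all _ fun v ↦ ?_) (integrable_tent_mul_exp L σ).norm
    (ae_of_all _ fun v ↦ by fun_prop)
  simp [norm_exp_mul_ofReal]

lemma norm_integral_tent_mul_exp_le_div_sq {L : ℝ} (hL : 0 ≤ L) (σ : ℝ) {y : ℝ} (hy : y ≠ 0) :
    ‖∫ v : ℝ, (tent L v : ℂ) * cexp ((σ + y * I) * v)‖ ≤
      (Real.exp (2 * L * σ) + Real.exp (L * σ)) ^ 2 / y ^ 2 := by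
  have hs : (σ + y * I : ℂ) ≠ 0 := fun h ↦ hy (by simpa using congrArg Complex.im h)
  have hy_le : |y| ≤ ‖(σ + y * I : ℂ)‖ := by
    simpa using Complex.abs_im_le_norm (σ + y * I)
  have hnum : ‖cexp (2 * L * (σ + y * I)) - cexp (L * (σ + y * I))‖ ≤
      Real.exp (2 * L * σ) + Real.exp (L * σ) := by
    refine (norm_sub_le _ _).trans_eq ?_
    simp [Complex.norm_exp]
  rw [integral_tent_mul_exp hL hs, norm_pow, norm_div, div_pow, ← sq_abs y]
  gcongr

lemma integrable_integral_tent_mul_exp {L : ℝ} (hL : 0 ≤ L) (σ : ℝ) :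
    Integrable fun y : ℝ ↦ ∫ v : ℝ, (tent L v : ℂ) * cexp ((σ + y * I) * v) := by
  refine integrable_of_norm_le_of_norm_le_div_sq
    (continuous_integral_tent_mul_exp L σ).aestronglyMeasurable
    (B := ∫ v : ℝ, ‖(tent L v : ℂ) * cexp (σ * v)‖)
    (fun y ↦ (norm_integral_le_integral_norm _).trans_eq ?_)
    (fun y hy ↦ norm_integral_tent_mul_exp_le_div_sq hL σ hy)
  simp [norm_exp_mul_ofReal]

noncomputable def logTent (x u : ℝ) : ℂ := ((u⁻¹ * tent (Real.log x) (Real.log u) : ℝ) : ℂ)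

lemma exp_smul_logTent (x : ℝ) (s : ℂ) (v : ℝ) :
    cexp (s * v) • logTent x (Real.exp v) = tent (Real.log x) v * cexp ((s - 1) * v) := by
  rw [logTent, Real.log_exp, smul_eq_mul, ofReal_mul, ofReal_inv, ofReal_exp, sub_mul,
    one_mul, Complex.exp_sub]
  field_simp

lemma mellin_logTent {x : ℝ} (hx : 1 ≤ x) {s : ℂ} (hs : s ≠ 1) :
    mellin (logTent x) s = (((x : ℂ) ^ (2 * (s - 1)) - (x : ℂ) ^ (s - 1)) / (s - 1)) ^ 2 := by
  have hx₀ : (x : ℂ) ≠ 0 := ofReal_ne_zero.2 (by linarith)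
  simp_rw [mellin_eq_integral_exp_smul, exp_smul_logTent,
    integral_tent_mul_exp (Real.log_nonneg hx) (sub_ne_zero.2 hs),
    cpow_def_of_ne_zero hx₀, ← ofReal_log (by linarith : 0 ≤ x)]
  ring_nf

lemma mellinConvergent_logTent (x : ℝ) (s : ℂ) : MellinConvergent (logTent x) s := by
  simpa only [mellinConvergent_iff_integrable_exp_smul, exp_smul_logTent]
    using integrable_tent_mul_exp _ _

lemma verticalIntegrable_mellin_logTent {x : ℝ} (hx : 1 ≤ x) (σ : ℝ) :
    VerticalIntegrable (mellin (logTent x)) σ := by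
  have h := integrable_integral_tent_mul_exp (Real.log_nonneg hx) (σ - 1)
  have hshift (y : ℝ) : (σ + y * I - 1 : ℂ) = ((σ - 1 : ℝ) + y * I) := by push_cast; ring
  simpa only [VerticalIntegrable, mellin_eq_integral_exp_smul, exp_smul_logTent, hshift]
    using h

lemma continuousAt_logTent (x : ℝ) {u : ℝ} (hu : u ≠ 0) : ContinuousAt (logTent x) u := by
  unfold logTent
  fun_prop (disch := exact hu)

lemma logTent_eq_ite {x u : ℝ} (hx : 0 < x) (hu : 0 < u) :
    logTent x u = if x ^ 3 ≤ u ∧ u ≤ x ^ 4 then ((u⁻¹ * Real.log (x ^ 4 / u) : ℝ) : ℂ)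
      else if x ^ 2 ≤ u ∧ u ≤ x ^ 3 then ((u⁻¹ * Real.log (u / x ^ 2) : ℝ) : ℂ) else 0 := by
  have hle (n : ℕ) : (x ^ n ≤ u ↔ n * Real.log x ≤ Real.log u) ∧
      (u ≤ x ^ n ↔ Real.log u ≤ n * Real.log x) := by
    rw [← Real.log_pow, Real.log_le_log_iff (by positivity) hu,
      Real.log_le_log_iff hu (by positivity)]
    exact ⟨Iff.rfl, Iff.rfl⟩
  rw [logTent, tent_eq_ite, Real.log_div (by positivity) hu.ne',
    Real.log_div hu.ne' (by positivity), Real.log_pow, Real.log_pow]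
  simp only [(hle 2).1, (hle 3).1, (hle 3).2, (hle 4).2]
  push_cast
  split_ifs <;> simp

theorem stmt3_general (x u a : ℝ) (hx : 2 ≤ x) (hu : 0 < u) :
    (1 / (2 * (Real.pi : ℂ))) * ∫ t : ℝ,
      (((x : ℂ) ^ ((2 : ℂ) * (((a : ℂ) + t * Complex.I) - 1))
        - (x : ℂ) ^ (((a : ℂ) + t * Complex.I) - 1)) /
          (((a : ℂ) + t * Complex.I) - 1)) ^ 2
        * (u : ℂ) ^ (-((a : ℂ) + t * Complex.I))
    = if x ^ 3 ≤ u ∧ u ≤ x ^ 4 then ((u⁻¹ * Real.log (x ^ 4 / u) : ℝ) : ℂ)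
      else if x ^ 2 ≤ u ∧ u ≤ x ^ 3 then ((u⁻¹ * Real.log (u / x ^ 2) : ℝ) : ℂ)
      else 0 := by
  have hx₁ : 1 ≤ x := by linarith
  rw [← logTent_eq_ite (by linarith) hu, ← mellinInv_mellin_eq a (logTent x) hu
    (mellinConvergent_logTent x a) (verticalIntegrable_mellin_logTent hx₁ a)
    (continuousAt_logTent x hu.ne'), mellinInv, real_smul]
  push_cast
  congr 1
  -- the integrands differ at most at `t = 0`, where `k₁(1)` is the junk value of `0 / 0`
  refine integral_congr_ae ?_
  filter_upwards [compl_mem_ae_iff.2 (measure_singleton (0 : ℝ))] with t ht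
  have hs : (a + t * I : ℂ) ≠ 1 := fun h ↦ ht (by simpa using congrArg Complex.im h)
  rw [smul_eq_mul, mellin_logTent hx₁ hs, mul_comm]

theorem stmt3 (x u a : ℝ) (hx : 2 ≤ x) (hu : 0 < u) (ha : -1/2 < a) :
    (1 / (2 * (Real.pi : ℂ))) * ∫ t : ℝ,
      (((x : ℂ) ^ ((2 : ℂ) * (((a : ℂ) + t * Complex.I) - 1))
        - (x : ℂ) ^ (((a : ℂ) + t * Complex.I) - 1)) /
          (((a : ℂ) + t * Complex.I) - 1)) ^ 2
        * (u : ℂ) ^ (-((a : ℂ) + t * Complex.I))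
    = if x ^ 3 ≤ u ∧ u ≤ x ^ 4 then ((u⁻¹ * Real.log (x ^ 4 / u) : ℝ) : ℂ)
      else if x ^ 2 ≤ u ∧ u ≤ x ^ 3 then ((u⁻¹ * Real.log (u / x ^ 2) : ℝ) : ℂ)
      else 0 :=
  stmt3_general x u a hx hu
end

section
/- For x ≥ 2 and u > 0, the inverse Mellin transform (1/(2πi))∫_{a−i∞}^{a+i∞} x^{s²+s} u^{−s} ds (for a > −1/2) equals (4π log x)^{−1/2} exp(−(log(u/x))²/(4 log x)). -/
/-!
Writing `L = log x`, `m = log (u / x)` and `s = a + t i`, the integrand is `exp (L s² - m s)`,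
a complex Gaussian in `t`. Completing the square, the shift by `a` only moves the contour
parallel to the real axis, so the Gaussian integral gives `√(π / L) · exp (-m² / (4 L))`,
independently of `a`.
-/

open Complex

lemma cpow_sq_add_mul_cpow_neg {x u : ℝ} (hx : 0 < x) (hu : 0 < u) (s : ℂ) :
    (x : ℂ) ^ (s ^ 2 + s) * (u : ℂ) ^ (-s)
      = cexp (Real.log x * s ^ 2 - Real.log (u / x) * s) := by
  rw [cpow_def_of_ne_zero (ofReal_ne_zero.mpr hx.ne'),
    cpow_def_of_ne_zero (ofReal_ne_zero.mpr hu.ne'), ← Complex.exp_add,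
    ← ofReal_log hx.le, ← ofReal_log hu.le, Real.log_div hu.ne' hx.ne']
  push_cast
  ring_nf

lemma one_div_two_pi_mul_rpow_pi_div {L : ℝ} (hL : 0 < L) :
    1 / (2 * Real.pi) * (Real.pi / L) ^ (1 / 2 : ℝ) = (4 * Real.pi * L) ^ (-(1 / 2) : ℝ) := by
  have hpi := Real.pi_pos
  have hprod : (Real.pi / L) ^ (1 / 2 : ℝ) * (4 * Real.pi * L) ^ (1 / 2 : ℝ) = 2 * Real.pi := by
    rw [← Real.mul_rpow (by positivity) (by positivity),
      show Real.pi / L * (4 * Real.pi * L) = (2 * Real.pi) ^ 2 by field_simp; ring,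
      ← Real.sqrt_eq_rpow, Real.sqrt_sq (by positivity)]
  have hpos : 0 < (4 * Real.pi * L) ^ (1 / 2 : ℝ) := by positivity
  rw [Real.rpow_neg (by positivity), ← hprod]
  field_simp

/-- Since `ds = i dt` on `Re s = a`, the left side is `(2πi)⁻¹ ∫ exp (L s² - m s) ds` along that line. -/
lemma integral_cexp_quadratic_vertical_line {L : ℝ} (hL : 0 < L) (a m : ℝ) :
    1 / (2 * (Real.pi : ℂ)) * ∫ t : ℝ, cexp (L * (a + t * I) ^ 2 - m * (a + t * I))
      = (((4 * Real.pi * L) ^ (-(1 / 2) : ℝ) * Real.exp (-m ^ 2 / (4 * L)) : ℝ) : ℂ) := by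
  have hexpand (t : ℝ) : (L : ℂ) * (a + t * I) ^ 2 - m * (a + t * I)
      = -L * t ^ 2 + I * (2 * a * L - m) * t + (L * a ^ 2 - m * a) := by
    ring_nf; rw [I_sq]; ring
  have hpow : ((Real.pi : ℂ) / -(-L : ℂ)) ^ (1 / 2 : ℂ) = ((Real.pi / L) ^ (1 / 2 : ℝ) : ℝ) := by
    rw [neg_neg, ofReal_cpow (by positivity)]
    push_cast
    ring_nf
  have hexp : (L * a ^ 2 - m * a : ℂ) - (I * (2 * a * L - m)) ^ 2 / (4 * (-L : ℂ))
      = ((-m ^ 2 / (4 * L) : ℝ) : ℂ) := by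
    have hLC : (L : ℂ) ≠ 0 := ofReal_ne_zero.mpr hL.ne'
    push_cast
    field_simp
    ring_nf
    rw [I_sq]
    ring
  simp_rw [hexpand]
  rw [integral_cexp_quadratic (by simpa using hL), hpow, hexp, ← ofReal_exp,
    ← one_div_two_pi_mul_rpow_pi_div hL]
  push_cast
  ring

theorem stmt4_general (x u a : ℝ) (hx : 2 ≤ x) (hu : 0 < u) :
    (1 / (2 * (Real.pi : ℂ))) * ∫ t : ℝ,
      (x : ℂ) ^ ((((a : ℂ) + t * Complex.I)) ^ 2 + ((a : ℂ) + t * Complex.I))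
        * (u : ℂ) ^ (-((a : ℂ) + t * Complex.I))
    = (((4 * Real.pi * Real.log x) ^ (-(1/2) : ℝ)
        * Real.exp (-(Real.log (u / x)) ^ 2 / (4 * Real.log x)) : ℝ) : ℂ) := by
  have hx0 : 0 < x := by linarith
  simp_rw [cpow_sq_add_mul_cpow_neg hx0 hu]
  exact integral_cexp_quadratic_vertical_line (Real.log_pos (by linarith)) a _

theorem stmt4 (x u a : ℝ) (hx : 2 ≤ x) (hu : 0 < u) (ha : -1/2 < a) :
    (1 / (2 * (Real.pi : ℂ))) * ∫ t : ℝ,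
      (x : ℂ) ^ ((((a : ℂ) + t * Complex.I)) ^ 2 + ((a : ℂ) + t * Complex.I))
        * (u : ℂ) ^ (-((a : ℂ) + t * Complex.I))
    = (((4 * Real.pi * Real.log x) ^ (-(1/2) : ℝ)
        * Real.exp (-(Real.log (u / x)) ^ 2 / (4 * Real.log x)) : ℝ) : ℂ) :=
  stmt4_general x u a hx hu
end

section
/- For every complex number s with Re(s) > 1/2, Re(Γ'/Γ(s)) ≥ log|s| − 4/3 ≥ log(|s|+2) − (4/3 + log 5). -/
/-!
For `0 < Re s` the digamma function has the series expansion
`ψ s = -γ + ∑ₙ (1/(n+1) - 1/(n+s))`: on `(0, ∞)` this follows from the log-convexity of `Γ`, which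
squeezes `ψ (x + 1)` between `log x` and `log (x + 1)`, and it extends to the half-plane by
analytic continuation. Subtracting the expansion at `1/2`, where `ψ (1/2) = -γ - 2 log 2`, gives
`Re ψ s + γ + 2 log 2 = ∑ₙ f n` with `f x = Re (1/(x+1/2) - 1/(x+s))`. For `Re s ≥ 1/2` the
function `f` is nonnegative and decreasing on `[0, ∞)`, so the sum dominates
`∫₀^∞ f = log |s| + log 2`. Hence `Re ψ s ≥ log |s| - (γ + log 2)`, and
`γ + log 2 < H₈ - 2 log 2 < 4/3`. The second inequality is `|s| + 2 ≤ 5 |s|` for `|s| ≥ 1/2`.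
-/

open Filter Topology Set MeasureTheory

local notation "γ" => Real.eulerMascheroniConstant

theorem Real.ne_neg_natCast_of_pos {x : ℝ} (hx : 0 < x) (m : ℕ) : x ≠ -m :=
  ((neg_nonpos.2 m.cast_nonneg).trans_lt hx).ne'

theorem Complex.ne_neg_natCast_of_re_pos {s : ℂ} (hs : 0 < s.re) (m : ℕ) : s ≠ -m := by
  rintro rfl
  simp only [neg_re, natCast_re, Left.neg_pos_iff] at hs
  exact hs.not_ge m.cast_nonneg

theorem summable_inv_natCast_add_one_sq : Summable fun n : ℕ => (((n : ℝ) + 1) ^ 2)⁻¹ := by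
  simpa using (summable_nat_add_iff 1).mpr (Real.summable_nat_pow_inv.mpr one_lt_two)

namespace Complex

theorem norm_inv_natCast_add_one_sub_inv_le {w : ℂ} {δ R : ℝ} (hδ : 0 < δ) (hδ1 : δ ≤ 1)
    (hw : δ ≤ w.re) (hR : ‖w‖ ≤ R) (n : ℕ) :
    ‖((n : ℂ) + 1)⁻¹ - ((n : ℂ) + w)⁻¹‖ ≤ (R + 1) / δ * (((n : ℝ) + 1) ^ 2)⁻¹ := by
  have hn : ‖(n : ℂ) + 1‖ = n + 1 := by exact_mod_cast norm_natCast (n + 1)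
  have hnw : δ * (n + 1) ≤ ‖(n : ℂ) + w‖ := calc
    δ * (n + 1) ≤ n + w.re := by nlinarith [n.cast_nonneg (α := ℝ)]
    _ = ((n : ℂ) + w).re := by simp
    _ ≤ _ := re_le_norm _
  have hnum : ‖(n : ℂ) + w - (n + 1)‖ ≤ R + 1 := calc
    _ = ‖w - 1‖ := by ring_nf
    _ ≤ ‖w‖ + ‖(1 : ℂ)‖ := norm_sub_le _ _
    _ ≤ R + 1 := by simpa using hR
  have hpos : 0 < δ * (n + 1) := by positivity
  rw [inv_sub_inv (by rw [← norm_ne_zero_iff, hn]; positivity)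
    (norm_ne_zero_iff.mp (hpos.trans_le hnw).ne'), norm_div, norm_mul, hn]
  calc _ ≤ (R + 1) / ((n + 1) * (δ * (n + 1))) := by gcongr; linarith [norm_nonneg w]
    _ = _ := by field_simp

theorem summable_inv_natCast_add_one_sub_inv {w : ℂ} (hw : 0 < w.re) :
    Summable fun n : ℕ => ((n : ℂ) + 1)⁻¹ - ((n : ℂ) + w)⁻¹ :=
  .of_norm_bounded (summable_inv_natCast_add_one_sq.mul_left _)
    (norm_inv_natCast_add_one_sub_inv_le (lt_min one_pos hw) (min_le_left _ _) (min_le_right _ _)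
      le_rfl)

theorem differentiableOn_tsum_inv_natCast_add_one_sub_inv :
    DifferentiableOn ℂ (fun w => ∑' n : ℕ, (((n : ℂ) + 1)⁻¹ - ((n : ℂ) + w)⁻¹))
      {w | 0 < w.re} := by
  intro z hz
  set δ := min 1 (z.re / 2)
  have hδ : 0 < δ := lt_min one_pos (half_pos hz)
  set U := {w : ℂ | δ < w.re ∧ ‖w‖ < ‖z‖ + 1}
  have hU : IsOpen U :=
    (isOpen_lt continuous_const continuous_re).inter (isOpen_lt continuous_norm continuous_const)
  have hzU : z ∈ U := ⟨(min_le_right _ _).trans_lt (half_lt_self hz), lt_add_one _⟩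
  refine (DifferentiableOn.differentiableAt ?_ (hU.mem_nhds hzU)).differentiableWithinAt
  refine differentiableOn_tsum_of_summable_norm (summable_inv_natCast_add_one_sq.mul_left _)
    (fun n w hw => ?_) hU fun n w hw =>
      norm_inv_natCast_add_one_sub_inv_le hδ (min_le_left _ _) hw.1.le hw.2.le n
  have : (n : ℂ) + w ≠ 0 := fun h =>
    ne_neg_natCast_of_re_pos (hδ.trans hw.1) n (eq_neg_of_add_eq_zero_right h)
  fun_prop (disch := assumption)

theorem digamma_ofReal {x : ℝ} (hx : ∀ m : ℕ, x ≠ -m) :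
    digamma x = ((logDeriv Real.Gamma x : ℝ) : ℂ) := by
  have hxc : ∀ m : ℕ, (x : ℂ) ≠ -m := fun m => by exact_mod_cast hx m
  have hcomplex := (differentiableAt_Gamma _ hxc).hasDerivAt.comp_ofReal
  have hreal : HasDerivAt (fun y : ℝ => Gamma y) ((deriv Real.Gamma x : ℝ) : ℂ) x := by
    simpa only [Gamma_ofReal] using (Real.differentiableAt_Gamma hx).hasDerivAt.ofReal_comp
  rw [digamma_def, logDeriv_apply, logDeriv_apply, hcomplex.unique hreal, Gamma_ofReal]
  push_cast
  rfl

theorem analyticOnNhd_digamma : AnalyticOnNhd ℂ digamma {s | 0 < s.re} := by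
  have hΓ : AnalyticOnNhd ℂ Gamma {s | 0 < s.re} :=
    DifferentiableOn.analyticOnNhd (fun s hs => (differentiableAt_Gamma s
      (ne_neg_natCast_of_re_pos hs)).differentiableWithinAt)
      (isOpen_lt continuous_const continuous_re)
  exact hΓ.deriv.div hΓ fun s hs => Gamma_ne_zero (ne_neg_natCast_of_re_pos hs)

end Complex

namespace Real

theorem logDeriv_Gamma_add_one {x : ℝ} (hx : ∀ m : ℕ, x ≠ -m) :
    logDeriv Gamma (x + 1) = logDeriv Gamma x + x⁻¹ := by
  have hx1 : ∀ m : ℕ, x + 1 ≠ -m := fun m h => hx (m + 1) (by push_cast; linarith)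
  have := Complex.digamma_apply_add_one x fun m => by exact_mod_cast hx m
  rw [← Complex.ofReal_one, ← Complex.ofReal_add, Complex.digamma_ofReal hx1,
    Complex.digamma_ofReal hx] at this
  exact_mod_cast this

theorem logDeriv_Gamma_add_nat {x : ℝ} (hx : 0 < x) (n : ℕ) :
    logDeriv Gamma (x + n) = logDeriv Gamma x + ∑ k ∈ Finset.range n, (x + k)⁻¹ := by
  induction n with
  | zero => simp
  | succ n ih =>
    rw [Nat.cast_succ, ← add_assoc, logDeriv_Gamma_add_one
      (ne_neg_natCast_of_pos (by positivity)), ih, Finset.sum_range_succ, add_assoc]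

/-- The derivative of the convex function `log ∘ Γ` at `y + 1` lies between its slopes on
`[y, y + 1]` and `[y + 1, y + 2]`, which are `log y` and `log (y + 1)`. -/
theorem logDeriv_Gamma_add_one_mem_Icc {y : ℝ} (hy : 0 < y) :
    logDeriv Gamma (y + 1) ∈ Icc (log y) (log (y + 1)) := by
  have hderiv : ∀ {z : ℝ}, 0 < z → deriv (log ∘ Gamma) z = logDeriv Gamma z := fun hz =>
    deriv.log (differentiableAt_Gamma (ne_neg_natCast_of_pos hz)) (Gamma_pos_of_pos hz).ne'
  have hdiff : ∀ {z : ℝ}, 0 < z → DifferentiableAt ℝ (log ∘ Gamma) z := fun hz =>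
    (differentiableAt_Gamma (ne_neg_natCast_of_pos hz)).log (Gamma_pos_of_pos hz).ne'
  have hslope : ∀ {z : ℝ}, 0 < z → slope (log ∘ Gamma) z (z + 1) = log z := fun hz => by
    rw [slope_def_field, Function.comp_apply, Function.comp_apply, Gamma_add_one hz.ne',
      log_mul hz.ne' (Gamma_pos_of_pos hz).ne']
    ring
  have hy1 : 0 < y + 1 := by linarith
  rw [← hslope hy, ← hslope hy1, ← hderiv hy1]
  exact ⟨convexOn_log_Gamma.slope_le_deriv hy hy1 (lt_add_one y) (hdiff hy1),
    convexOn_log_Gamma.deriv_le_slope hy1 (mem_Ioi.2 (by linarith)) (lt_add_one _) (hdiff hy1)⟩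

theorem tendsto_logDeriv_Gamma_sub_log :
    Tendsto (fun x => logDeriv Gamma x - log x) atTop (𝓝 0) := by
  refine tendsto_of_tendsto_of_tendsto_of_le_of_le' (tendsto_log_comp_add_sub_log (-1))
    tendsto_const_nhds ?_ ?_
  all_goals
    filter_upwards [eventually_gt_atTop 1] with x hx
    have := logDeriv_Gamma_add_one_mem_Icc (y := x - 1) (by linarith)
    rw [sub_add_cancel] at this
  · rw [← sub_eq_add_neg]
    linarith [this.1]
  · linarith [this.2]

theorem hasSum_logDeriv_Gamma {x : ℝ} (hx : 0 < x) :
    HasSum (fun n : ℕ => ((n : ℝ) + 1)⁻¹ - ((n : ℝ) + x)⁻¹) (logDeriv Gamma x + γ) := by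
  have hsum : Summable fun n : ℕ => ((n : ℝ) + 1)⁻¹ - ((n : ℝ) + x)⁻¹ := by
    refine Complex.summable_ofReal.mp ?_
    simpa using Complex.summable_inv_natCast_add_one_sub_inv (w := x) (by simpa)
  rw [hsum.hasSum_iff_tendsto_nat]
  have hpartial : ∀ n : ℕ, ∑ k ∈ Finset.range n, (((k : ℝ) + 1)⁻¹ - ((k : ℝ) + x)⁻¹) =
      (harmonic n - log n) - (logDeriv Gamma (x + n) - log (x + n))
        - (log (n + x) - log n) + logDeriv Gamma x := fun n => by
    rw [logDeriv_Gamma_add_nat hx, Finset.sum_sub_distrib, add_comm (n : ℝ) x]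
    push_cast [harmonic]
    simp only [add_comm (x : ℝ)]
    ring
  have hxn := tendsto_atTop_add_const_left _ x tendsto_natCast_atTop_atTop
  have hlim := ((tendsto_harmonic_sub_log.sub (tendsto_logDeriv_Gamma_sub_log.comp hxn)).sub
    ((tendsto_log_comp_add_sub_log x).comp tendsto_natCast_atTop_atTop)).add_const
    (logDeriv Gamma x)
  rw [sub_zero, sub_zero, add_comm] at hlim
  exact hlim.congr fun n => (hpartial n).symm

theorem eulerMascheroniConstant_add_log_two_le : γ + log 2 ≤ 4 / 3 := by
  have hγ := eulerMascheroniConstant_lt_eulerMascheroniSeq' 8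
  have hlog8 : log 8 = 3 * log 2 := by
    rw [show (8 : ℝ) = 2 ^ 3 by norm_num, log_pow, Nat.cast_ofNat]
  norm_num [eulerMascheroniSeq', harmonic, Finset.sum_range_succ, hlog8] at hγ
  linarith [log_two_gt_d9]

end Real

namespace Complex

theorem tendsto_ofReal_nhdsNE (x : ℝ) : Tendsto ((↑) : ℝ → ℂ) (𝓝[≠] x) (𝓝[≠] x) :=
  tendsto_nhdsWithin_iff.mpr ⟨(continuous_ofReal.tendsto x).mono_left nhdsWithin_le_nhds,
    eventually_nhdsWithin_of_forall fun _ hy => ofReal_injective.ne hy⟩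

theorem hasSum_digamma {s : ℂ} (hs : 0 < s.re) :
    HasSum (fun n : ℕ => ((n : ℂ) + 1)⁻¹ - ((n : ℂ) + s)⁻¹) (digamma s + γ) := by
  suffices EqOn (fun s => digamma s + γ) (fun s => ∑' n : ℕ, (((n : ℂ) + 1)⁻¹ - ((n : ℂ) + s)⁻¹))
      {s | 0 < s.re} by
    rw [show digamma s + γ = _ from this hs]
    exact (summable_inv_natCast_add_one_sub_inv hs).hasSum
  have hreal : ∀ x : ℝ, 0 < x → digamma x + γ =
      ∑' n : ℕ, (((n : ℂ) + 1)⁻¹ - ((n : ℂ) + x)⁻¹) := fun x hx => by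
    rw [digamma_ofReal (Real.ne_neg_natCast_of_pos hx)]
    have := (hasSum_ofReal.mpr (Real.hasSum_logDeriv_Gamma hx)).tsum_eq
    push_cast at this
    exact this.symm
  refine (analyticOnNhd_digamma.add analyticOnNhd_const).eqOn_of_preconnected_of_frequently_eq
    (z₀ := 1)
    (differentiableOn_tsum_inv_natCast_add_one_sub_inv.analyticOnNhd
      (isOpen_lt continuous_const continuous_re)) ?_ ?_ ?_
  · exact (convex_halfSpace_re_gt 0).isPreconnected
  · simp
  · simpa using (tendsto_ofReal_nhdsNE 1).frequently ((eventually_nhdsWithin_of_eventually_nhds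
      (lt_mem_nhds one_pos)).mono hreal).frequently

theorem tendsto_log_norm_add_sub_log (a : ℂ) :
    Tendsto (fun x : ℝ => Real.log ‖(x : ℂ) + a‖ - Real.log x) atTop (𝓝 0) := by
  refine tendsto_of_tendsto_of_tendsto_of_le_of_le' (Real.tendsto_log_comp_add_sub_log (-‖a‖))
    (Real.tendsto_log_comp_add_sub_log ‖a‖) ?_ ?_
  all_goals
    filter_upwards [eventually_gt_atTop ‖a‖] with x hx
    have hx' : ‖(x : ℂ)‖ = x := by simp [abs_of_pos ((norm_nonneg a).trans_lt hx)]
    have hlow := norm_sub_norm_le (x : ℂ) (-a)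
    have hup := norm_add_le (x : ℂ) a
    rw [hx', norm_neg, sub_neg_eq_add] at hlow
    rw [hx'] at hup
    gcongr <;> linarith

theorem re_inv_add_half_sub_inv_add {s : ℂ} (hs : 0 < s.re) {x : ℝ} (hx : 0 ≤ x) :
    (((x : ℂ) + 1 / 2)⁻¹ - ((x : ℂ) + s)⁻¹).re = (s.re - 1 / 2) / ((x + 1 / 2) * (x + s.re))
      + s.im ^ 2 / ((x + s.re) * ((x + s.re) ^ 2 + s.im ^ 2)) := by
  have hxs : 0 < x + s.re := by linarith
  have hcast : (x : ℂ) + 1 / 2 = ((x + 1 / 2 : ℝ) : ℂ) := by push_cast; rfl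
  rw [sub_re, hcast, ← ofReal_inv, ofReal_re, inv_re, normSq_apply]
  simp only [add_re, ofReal_re, add_im, ofReal_im, zero_add]
  field_simp
  ring

theorem antitoneOn_re_inv_add_half_sub_inv_add {s : ℂ} (hs : 1 / 2 ≤ s.re) :
    AntitoneOn (fun x : ℝ => (((x : ℂ) + 1 / 2)⁻¹ - ((x : ℂ) + s)⁻¹).re) (Ici 0) := by
  intro a ha b hb hab
  have hs' : 0 < s.re := by linarith
  simp only [re_inv_add_half_sub_inv_add hs' ha, re_inv_add_half_sub_inv_add hs' hb]
  simp only [mem_Ici] at ha hb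
  gcongr

theorem re_inv_add_half_sub_inv_add_nonneg {s : ℂ} (hs : 1 / 2 ≤ s.re) {x : ℝ} (hx : 0 ≤ x) :
    0 ≤ (((x : ℂ) + 1 / 2)⁻¹ - ((x : ℂ) + s)⁻¹).re := by
  have hs' : 0 < s.re := by linarith
  rw [re_inv_add_half_sub_inv_add hs' hx]
  exact add_nonneg (div_nonneg (by linarith) (by positivity)) (by positivity)

theorem hasDerivAt_re_log_add_half_sub_log_add {s : ℂ} (hs : 0 < s.re) {x : ℝ} (hx : 0 ≤ x) :
    HasDerivAt (fun x : ℝ => (log (x + 1 / 2) - log (x + s)).re)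
      (((x : ℂ) + 1 / 2)⁻¹ - ((x : ℂ) + s)⁻¹).re x := by
  have hmem : ∀ w : ℂ, 0 < w.re → (x : ℂ) + w ∈ slitPlane := fun w hw => by
    rw [mem_slitPlane_iff]
    left
    simp only [add_re, ofReal_re]
    linarith
  have h := (((hasDerivAt_id' (x : ℂ)).add_const (1 / 2)).clog (hmem _ (by norm_num))).fun_sub
    (((hasDerivAt_id' (x : ℂ)).add_const s).clog (hmem _ hs))
  rw [one_div ((x : ℂ) + 1 / 2), one_div ((x : ℂ) + s)] at h
  exact h.real_of_complex

theorem log_norm_add_log_two_le_of_hasSum {s : ℂ} (hs : 1 / 2 ≤ s.re) {a : ℝ}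
    (h : HasSum (fun n : ℕ => (((n : ℂ) + 1 / 2)⁻¹ - ((n : ℂ) + s)⁻¹).re) a) :
    Real.log ‖s‖ + Real.log 2 ≤ a := by
  set f : ℝ → ℝ := fun x => (((x : ℂ) + 1 / 2)⁻¹ - ((x : ℂ) + s)⁻¹).re with hf
  have hfn : HasSum (fun n : ℕ => f (n + 0 : ℕ)) a := by simpa [hf] using h
  have hlim : Tendsto (fun x : ℝ => (log (x + 1 / 2) - log (x + s)).re) atTop (𝓝 0) := by
    simpa [log_re] using (tendsto_log_norm_add_sub_log (1 / 2)).sub (tendsto_log_norm_add_sub_log s)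
  have hint : ∫ x in Ioi ((0 : ℕ) : ℝ), f x = Real.log ‖s‖ + Real.log 2 := by
    rw [Nat.cast_zero, integral_Ioi_of_hasDerivAt_of_nonneg'
      (fun x hx => hasDerivAt_re_log_add_half_sub_log_add (by linarith) hx)
      (fun x hx => re_inv_add_half_sub_inv_add_nonneg hs hx.le) hlim]
    simp [log_re]
  rw [← hint, ← hfn.tsum_eq]
  refine AntitoneOn.integral_le_tsum_comp_add 0 ?_ ?_ fun t ht => ?_
  · exact Nat.cast_zero (R := ℝ) ▸ antitoneOn_re_inv_add_half_sub_inv_add hs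
  · simpa using hfn.summable
  · exact re_inv_add_half_sub_inv_add_nonneg hs (by simpa using ht : (0 : ℝ) < t).le

theorem log_norm_sub_le_re_digamma {s : ℂ} (hs : 1 / 2 ≤ s.re) :
    Real.log ‖s‖ - (γ + Real.log 2) ≤ (digamma s).re := by
  have h : HasSum (fun n : ℕ => (((n : ℂ) + 1 / 2)⁻¹ - ((n : ℂ) + s)⁻¹).re)
      ((digamma s).re + 2 * Real.log 2 + γ) := by
    convert hasSum_re ((hasSum_digamma (by linarith : 0 < s.re)).sub
      (hasSum_digamma (s := 1 / 2) (by norm_num))) using 1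
    · ext n
      simp only [sub_re]
      ring
    · rw [digamma_one_half]
      simp only [neg_mul, sub_add_cancel, sub_neg_eq_add, add_re, ofReal_re, mul_re, re_ofNat,
        log_re, norm_ofNat, im_ofNat, zero_mul, sub_zero]
      ring
  linarith [log_norm_add_log_two_le_of_hasSum hs h]

end Complex

theorem stmt6 (s : ℂ) (hs : 1/2 < s.re) :
    Real.log (‖s‖) - 4/3 ≤ (deriv Complex.Gamma s / Complex.Gamma s).re ∧
    Real.log (‖s‖ + 2) - (4/3 + Real.log 5) ≤ Real.log (‖s‖) - 4/3 := by
  have hψ : Real.log ‖s‖ - (γ + Real.log 2) ≤ (deriv Complex.Gamma s / Complex.Gamma s).re :=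
    Complex.log_norm_sub_le_re_digamma hs.le
  refine ⟨by linarith [Real.eulerMascheroniConstant_add_log_two_le], ?_⟩
  have hnorm : 1 / 2 ≤ ‖s‖ := hs.le.trans (Complex.re_le_norm s)
  have : Real.log (‖s‖ + 2) ≤ Real.log (5 * ‖s‖) := Real.log_le_log (by positivity) (by linarith)
  rw [Real.log_mul (by norm_num) (by positivity)] at this
  linarith
end

section
/- Let x ≥ 2 and define φ₆(v) = 1 − ((e^{−v} − e^{−2v})/v)² for v > 0. Then φ₆(v) ≥ φ₆(1)·v for 0 < v ≤ 1 and φ₆(v) ≥ φ₆(1) for v ≥ 1; consequently, for 0 < β₀ < 1, k₁(1) − k₁(β₀) ≥ (9/10)(log x)² · min(1, (1−β₀) log x), where k₁(s) = ((x^{2(s−1)} − x^{s−1})/(s−1))² and k₁(1) = (log x)². -/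
/-!
Put `g v = ∫₁² e^{-vt} dt = (e^{-v} - e^{-2v}) / v`, so that `φ₆ = 1 - g²`. Since `g` is
antitone, `φ₆ v ≥ φ₆ 1` for `v ≥ 1`. For `0 < v ≤ 1`, convexity of `exp` on `[-t, 0]` gives
`g v ≤ (1 - v) + v g 1`, and convexity of the square then `(g v)² ≤ (1 - v) + v (g 1)²`, i.e.
`φ₆ v ≥ v φ₆ 1`. As `g 1 = s - s²` with `s = e⁻¹`, `g 1 ≤ 1/4` and `φ₆ 1 ≥ 15/16 ≥ 9/10`.
Finally, with `v = (1 - β₀) log x` one has `k₁(β₀) = (log x)² (g v)²`.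
-/

open Real intervalIntegral

noncomputable def negExpIntegral (v : ℝ) : ℝ := ∫ t in (1 : ℝ)..2, exp (-v * t)

lemma negExpIntegral_eq_div {v : ℝ} (hv : v ≠ 0) :
    negExpIntegral v = (exp (-v) - exp (-2 * v)) / v := by
  rw [negExpIntegral, integral_comp_mul_left (fun u => exp u) (neg_ne_zero.2 hv), integral_exp,
    smul_eq_mul]
  field_simp
  ring_nf

lemma negExpIntegral_nonneg (v : ℝ) : 0 ≤ negExpIntegral v :=
  integral_nonneg (by norm_num) fun _ _ => (exp_pos _).le

lemma negExpIntegral_antitone : Antitone negExpIntegral := by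
  intro a b hab
  apply integral_mono_on (by norm_num) ((by fun_prop : Continuous _).intervalIntegrable _ _)
    ((by fun_prop : Continuous _).intervalIntegrable _ _)
  intro t ht
  exact exp_le_exp.2 (by nlinarith [ht.1])

lemma negExpIntegral_one_le : negExpIntegral 1 ≤ 1 / 4 := by
  have hexp2 : exp (-2) = exp (-1) ^ 2 := by rw [← exp_nat_mul]; norm_num
  rw [negExpIntegral_eq_div one_ne_zero, div_one, mul_one, hexp2]
  nlinarith [sq_nonneg (exp (-1) - 1 / 2)]

lemma negExpIntegral_le_convex_comb {v : ℝ} (hv₀ : 0 ≤ v) (hv₁ : v ≤ 1) :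
    negExpIntegral v ≤ (1 - v) + v * negExpIntegral 1 := by
  have hcomb : ∫ t in (1 : ℝ)..2, ((1 - v) + v * exp (-1 * t))
      = (1 - v) + v * negExpIntegral 1 := by
    rw [integral_add ((by fun_prop : Continuous _).intervalIntegrable _ _)
      ((by fun_prop : Continuous _).intervalIntegrable _ _), integral_const, integral_const_mul,
      negExpIntegral]
    norm_num
  rw [← hcomb, negExpIntegral]
  apply integral_mono_on (by norm_num) ((by fun_prop : Continuous _).intervalIntegrable _ _)
    ((by fun_prop : Continuous _).intervalIntegrable _ _)
  intro t _
  have := convexOn_exp.2 (Set.mem_univ 0) (Set.mem_univ (-t)) (sub_nonneg.2 hv₁) hv₀ (by ring)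
  simpa [mul_comm] using this

lemma one_sub_negExpIntegral_one_sq_mul_le {v : ℝ} (hv₀ : 0 ≤ v) (hv₁ : v ≤ 1) :
    (1 - negExpIntegral 1 ^ 2) * v ≤ 1 - negExpIntegral v ^ 2 := by
  have hg := negExpIntegral_le_convex_comb hv₀ hv₁
  have hsq : negExpIntegral v ^ 2 ≤ ((1 - v) + v * negExpIntegral 1) ^ 2 :=
    pow_le_pow_left₀ (negExpIntegral_nonneg v) hg 2
  nlinarith [mul_nonneg (mul_nonneg hv₀ (sub_nonneg.2 hv₁)) (sq_nonneg (1 - negExpIntegral 1))]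

lemma one_sub_negExpIntegral_one_sq_le {v : ℝ} (hv : 1 ≤ v) :
    1 - negExpIntegral 1 ^ 2 ≤ 1 - negExpIntegral v ^ 2 := by
  have := pow_le_pow_left₀ (negExpIntegral_nonneg v) (negExpIntegral_antitone hv) 2
  linarith

lemma nine_tenths_mul_min_le {v : ℝ} (hv : 0 ≤ v) :
    9 / 10 * min 1 v ≤ 1 - negExpIntegral v ^ 2 := by
  have h₁ : 9 / 10 ≤ 1 - negExpIntegral 1 ^ 2 := by
    nlinarith [negExpIntegral_one_le, negExpIntegral_nonneg 1]
  rcases le_total v 1 with hv₁ | hv₁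
  · rw [min_eq_right hv₁]
    nlinarith [one_sub_negExpIntegral_one_sq_mul_le hv hv₁]
  · rw [min_eq_left hv₁]
    linarith [one_sub_negExpIntegral_one_sq_le hv₁]

lemma rpow_diff_quot_sq_eq {x β : ℝ} (hx : 0 < x) (hlog : log x ≠ 0) (hβ : β ≠ 1) :
    ((x ^ (2 * (β - 1)) - x ^ (β - 1)) / (β - 1)) ^ 2
      = log x ^ 2 * negExpIntegral ((1 - β) * log x) ^ 2 := by
  have hβ' : 1 - β ≠ 0 := sub_ne_zero.2 hβ.symm
  rw [negExpIntegral_eq_div (mul_ne_zero hβ' hlog), rpow_def_of_pos hx, rpow_def_of_pos hx]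
  have hsub : β - 1 ≠ 0 := sub_ne_zero.2 hβ
  field_simp
  ring_nf

theorem stmt9 (x : ℝ) (hx : 2 ≤ x) :
    let φ : ℝ → ℝ := fun v => 1 - ((Real.exp (-v) - Real.exp (-2 * v)) / v) ^ 2
    (∀ v : ℝ, 0 < v → v ≤ 1 → φ 1 * v ≤ φ v) ∧
    (∀ v : ℝ, 1 ≤ v → φ 1 ≤ φ v) ∧
    (∀ β₀ : ℝ, 0 < β₀ → β₀ < 1 →
      (9/10) * (Real.log x) ^ 2 * min 1 ((1 - β₀) * Real.log x)
        ≤ (Real.log x) ^ 2 - ((x ^ (2 * (β₀ - 1)) - x ^ (β₀ - 1)) / (β₀ - 1)) ^ 2) := by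
  intro φ
  have hφ {v : ℝ} (hv : 0 < v) : φ v = 1 - negExpIntegral v ^ 2 := by
    rw [negExpIntegral_eq_div hv.ne']
  refine ⟨fun v hv₀ hv₁ => ?_, fun v hv => ?_, fun β₀ _ hβ₀ => ?_⟩
  · rw [hφ one_pos, hφ hv₀]
    exact one_sub_negExpIntegral_one_sq_mul_le hv₀.le hv₁
  · rw [hφ one_pos, hφ (by linarith)]
    exact one_sub_negExpIntegral_one_sq_le hv
  · have hlog : 0 < log x := log_pos (by linarith)
    rw [rpow_diff_quot_sq_eq (by linarith) hlog.ne' hβ₀.ne]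
    have := nine_tenths_mul_min_le (mul_pos (sub_pos.2 hβ₀) hlog).le
    nlinarith [sq_nonneg (log x)]
end

section
/- For x ≥ 101 and all real t, |k₁(−1/2 + it)| ≤ k₁(−1/2) · ((1+101^{−3/2})/(1−101^{−3/2}))² · 9/(9+4t²), where k₁(s) = ((x^{2(s−1)} − x^{s−1})/(s−1))². -/
/-! With `w = s - 1 = -3/2 + it` and `p = x^{-3/2}`, the triangle inequality gives
`|x^{2w} - x^w| ≤ p² + p = p (1 + p)`, while `k₁(-1/2) = p² (1 - p)² / (3/2)²`. So the claim
reduces to `(1 + p) (1 - a) ≤ (1 - p) (1 + a)` for `a = 101^{-3/2} < 1`, which expands to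
`p ≤ a`. -/

open Complex

lemma one_add_le_one_sub_mul_div {p a : ℝ} (hpa : p ≤ a) (ha : a < 1) :
    1 + p ≤ (1 - p) * ((1 + a) / (1 - a)) := by
  rw [mul_div_assoc', le_div_iff₀ (by linarith)]
  nlinarith

lemma norm_cpow_two_mul_sub_cpow_le {x : ℝ} (hx : 0 < x) (w : ℂ) :
    ‖(x : ℂ) ^ (2 * w) - (x : ℂ) ^ w‖ ≤ x ^ w.re * (1 + x ^ w.re) := by
  have h2w : x ^ (2 * w).re = (x ^ w.re) ^ 2 := by
    rw [show (2 * w).re = w.re * 2 by simp [mul_comm], Real.rpow_mul hx.le, Real.rpow_two]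
  calc ‖(x : ℂ) ^ (2 * w) - (x : ℂ) ^ w‖ ≤ ‖(x : ℂ) ^ (2 * w)‖ + ‖(x : ℂ) ^ w‖ := norm_sub_le _ _
    _ = x ^ w.re * (1 + x ^ w.re) := by
      rw [norm_cpow_eq_rpow_re_of_pos hx, norm_cpow_eq_rpow_re_of_pos hx, h2w]
      ring

theorem stmt14 (x t : ℝ) (hx : 101 ≤ x) :
    ‖(((x : ℂ) ^ ((2 : ℂ) * (((-1/2 : ℂ) + t * Complex.I) - 1))
        - (x : ℂ) ^ (((-1/2 : ℂ) + t * Complex.I) - 1)) /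
          (((-1/2 : ℂ) + t * Complex.I) - 1)) ^ 2‖
    ≤ ((x ^ (-3 : ℝ) - x ^ (-(3/2) : ℝ)) / (-(3/2))) ^ 2
      * ((1 + (101 : ℝ) ^ (-(3/2) : ℝ)) / (1 - (101 : ℝ) ^ (-(3/2) : ℝ))) ^ 2
      * (9 / (9 + 4 * t ^ 2)) := by
  set w : ℂ := (-1/2 : ℂ) + t * I - 1
  set p : ℝ := x ^ (-(3/2) : ℝ)
  set a : ℝ := (101 : ℝ) ^ (-(3/2) : ℝ)
  have hx0 : 0 < x := by linarith
  have hw_re : w.re = -(3/2) := by norm_num [w]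
  have hw_norm : ‖w‖ ^ 2 = 9/4 + t ^ 2 := by
    rw [Complex.sq_norm, normSq_apply]; simp [w]; ring
  have hpa : p ≤ a := Real.rpow_le_rpow_of_nonpos (by norm_num) hx (by norm_num)
  have ha : a < 1 := Real.rpow_lt_one_of_one_lt_of_neg (by norm_num) (by norm_num)
  have hx3 : x ^ (-3 : ℝ) = p ^ 2 := by
    rw [← Real.rpow_two, ← Real.rpow_mul hx0.le]; norm_num
  have hnum : ‖(x : ℂ) ^ (2 * w) - (x : ℂ) ^ w‖ ≤ p * (1 + p) := by
    simpa only [hw_re] using norm_cpow_two_mul_sub_cpow_le hx0 w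
  calc ‖(((x : ℂ) ^ (2 * w) - (x : ℂ) ^ w) / w) ^ 2‖
      = ‖(x : ℂ) ^ (2 * w) - (x : ℂ) ^ w‖ ^ 2 / (9/4 + t ^ 2) := by
        rw [norm_pow, norm_div, div_pow, hw_norm]
    _ ≤ (p * ((1 - p) * ((1 + a) / (1 - a)))) ^ 2 / (9/4 + t ^ 2) := by
        gcongr
        exact hnum.trans (by gcongr; exact one_add_le_one_sub_mul_div hpa ha)
    _ = _ := by
        rw [hx3]
        field_simp
        ring
end

section
/- For every real t ≥ 0 and x ≥ 10^{10}, the integral ∫_{4 log x}^{∞} (4π log x)^{−1/2} exp(−t²/(4 log x)) · ((t + log x)·t/(2 log x)) · x e^{t} dt ≤ (5/√π)·x·(log x)^{1/2}. -/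
/-!
Write `L = log x` and substitute `t = 4L + s`. Completing the square turns the Gaussian times
`e^t` into `e^{-s} e^{-s²/(4L)}`, and `(t + L) t = s² + 9Ls + 20L²`. Bounding `e^{-u}` by `1` on
the lower-order terms and by `1 - u + u²/2` on `20L²` leaves a polynomial majorant whose
integral against `e^{-s}` is a sum of factorials, `20L² - L + 17`. The `-5Ls²` correction is what
beats the `9Ls` term; once `L ≥ 17` only the main term `20L²` survives, and it gives exactly
`5 x √L / √π`.
-/

open MeasureTheory Set Real Nat

theorem integral_comp_add_right_Ioi {E : Type*} [NormedAddCommGroup E] [NormedSpace ℝ E]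
    (g : ℝ → E) (a b : ℝ) : ∫ x in Ioi a, g (x + b) = ∫ x in Ioi (a + b), g x := by
  have h : Ioi a = (· + b) ⁻¹' Ioi (a + b) := by simp
  rw [h, (measurePreserving_add_right volume b).setIntegral_preimage_emb
    (measurableEmbedding_addRight b)]

lemma exp_neg_mul_rpow_succ_sub_one (n : ℕ) (s : ℝ) :
    exp (-s) * s ^ ((n + 1 : ℝ) - 1) = s ^ n * exp (-s) := by
  rw [add_sub_cancel_right, rpow_natCast, mul_comm]

lemma integrableOn_Ioi_pow_mul_exp_neg (n : ℕ) :
    IntegrableOn (fun s : ℝ => s ^ n * exp (-s)) (Ioi 0) :=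
  (GammaIntegral_convergent (by positivity)).congr_fun
    (fun s _ => exp_neg_mul_rpow_succ_sub_one n s) measurableSet_Ioi

lemma integral_Ioi_pow_mul_exp_neg (n : ℕ) : ∫ s in Ioi (0 : ℝ), s ^ n * exp (-s) = n ! := by
  rw [← Gamma_nat_eq_factorial, Gamma_eq_integral (by positivity)]
  exact (setIntegral_congr_fun measurableSet_Ioi fun s _ => exp_neg_mul_rpow_succ_sub_one n s).symm

section Polynomial

variable {n : ℕ} (c : Fin n → ℝ)

lemma integrableOn_Ioi_sum_mul_pow_mul_exp_neg :
    IntegrableOn (fun s : ℝ => (∑ i, c i * s ^ (i : ℕ)) * exp (-s)) (Ioi 0) := by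
  simp_rw [Finset.sum_mul, mul_assoc]
  exact integrable_finsetSum _ fun i _ =>
    (integrableOn_Ioi_pow_mul_exp_neg (i : ℕ)).const_mul (c i)

lemma integral_Ioi_sum_mul_pow_mul_exp_neg :
    ∫ s in Ioi (0 : ℝ), (∑ i, c i * s ^ (i : ℕ)) * exp (-s) = ∑ i, c i * (i : ℕ)! := by
  simp_rw [Finset.sum_mul, mul_assoc]
  rw [integral_finsetSum _ fun (i : Fin n) _ =>
    (integrableOn_Ioi_pow_mul_exp_neg (i : ℕ)).const_mul (c i)]
  simp_rw [integral_const_mul, integral_Ioi_pow_mul_exp_neg]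

end Polynomial

lemma exp_neg_le_one_sub_add_sq_div_two {u : ℝ} (hu : 0 ≤ u) : exp (-u) ≤ 1 - u + u ^ 2 / 2 := by
  have hpos : 0 < 1 - u + u ^ 2 / 2 := by nlinarith [sq_nonneg (u - 1)]
  -- (1 - u + u²/2)(1 + u + u²/2) = 1 + u⁴/4
  have h : 1 ≤ (1 - u + u ^ 2 / 2) * exp u := by
    nlinarith [mul_le_mul_of_nonneg_left (quadratic_le_exp_of_nonneg hu) hpos.le,
      pow_two_nonneg (u ^ 2)]
  rw [exp_neg, inv_le_iff_one_le_mul₀ (exp_pos u)]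
  linarith

lemma exp_seventeen_lt : exp 17 < 10 ^ 10 := by
  calc exp 17 = exp 1 ^ 17 := by rw [← exp_nat_mul]; norm_num
    _ < 3 ^ 17 := by gcongr; exact exp_one_lt_three
    _ < 10 ^ 10 := by norm_num

lemma exp_neg_sq_div_mul_exp_add {L : ℝ} (hL : L ≠ 0) (s : ℝ) :
    exp (-(s + 4 * L) ^ 2 / (4 * L)) * exp (s + 4 * L) = exp (-(s ^ 2 / (4 * L))) * exp (-s) := by
  rw [← exp_add, ← exp_add]
  congr 1
  field_simp
  ring

lemma quadratic_mul_exp_neg_sq_div_le {L s : ℝ} (hL : 0 < L) (hs : 0 ≤ s) :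
    (s ^ 2 + 9 * L * s + 20 * L ^ 2) * exp (-(s ^ 2 / (4 * L)))
      ≤ 5 / 8 * s ^ 4 + (1 - 5 * L) * s ^ 2 + 9 * L * s + 20 * L ^ 2 := by
  have hu : 0 ≤ s ^ 2 / (4 * L) := by positivity
  have hlin : (s ^ 2 + 9 * L * s) * exp (-(s ^ 2 / (4 * L))) ≤ s ^ 2 + 9 * L * s :=
    mul_le_of_le_one_right (by positivity) (exp_le_one_iff.2 (by linarith))
  have hquad :
      20 * L ^ 2 * exp (-(s ^ 2 / (4 * L))) ≤ 20 * L ^ 2 - 5 * L * s ^ 2 + 5 / 8 * s ^ 4 := by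
    calc _ ≤ 20 * L ^ 2 * (1 - s ^ 2 / (4 * L) + (s ^ 2 / (4 * L)) ^ 2 / 2) := by
          gcongr; exact exp_neg_le_one_sub_add_sq_div_two hu
      _ = _ := by field_simp; ring
  linarith

lemma gaussian_tail_integrand_comp_add {L : ℝ} (hL : L ≠ 0) (K x s : ℝ) :
    K * exp (-(s + 4 * L) ^ 2 / (4 * L)) * ((s + 4 * L + L) * (s + 4 * L) / (2 * L))
        * (x * exp (s + 4 * L))
      = K * x / (2 * L) * ((s ^ 2 + 9 * L * s + 20 * L ^ 2) * exp (-(s ^ 2 / (4 * L)))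
        * exp (-s)) := by
  rw [mul_assoc _ (exp (-(s ^ 2 / (4 * L)))), ← exp_neg_sq_div_mul_exp_add hL]
  field_simp
  ring

noncomputable def tailMajorantCoeff (L : ℝ) : Fin 5 → ℝ := ![20 * L ^ 2, 9 * L, 1 - 5 * L, 0, 5 / 8]

lemma sum_tailMajorantCoeff_mul_pow (L s : ℝ) :
    ∑ i, tailMajorantCoeff L i * s ^ (i : ℕ)
      = 5 / 8 * s ^ 4 + (1 - 5 * L) * s ^ 2 + 9 * L * s + 20 * L ^ 2 := by
  simp only [tailMajorantCoeff, Fin.sum_univ_succ, Fin.sum_univ_zero, Matrix.cons_val_zero,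
    Matrix.cons_val_succ, Fin.val_zero, Fin.val_succ]
  ring

lemma sum_tailMajorantCoeff_mul_factorial (L : ℝ) :
    ∑ i, tailMajorantCoeff L i * (i : ℕ)! = 20 * L ^ 2 - L + 17 := by
  simp only [tailMajorantCoeff, Fin.sum_univ_succ, Fin.sum_univ_zero, Matrix.cons_val_zero,
    Matrix.cons_val_succ, Fin.val_zero, Fin.val_succ]
  norm_num [Nat.factorial]
  ring

lemma gaussian_tail_integrand_comp_add_le {K x L s : ℝ} (hK : 0 ≤ K) (hx : 0 ≤ x) (hL : 0 < L)
    (hs : 0 ≤ s) :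
    K * exp (-(s + 4 * L) ^ 2 / (4 * L)) * ((s + 4 * L + L) * (s + 4 * L) / (2 * L))
        * (x * exp (s + 4 * L))
      ≤ K * x / (2 * L) * ((∑ i, tailMajorantCoeff L i * s ^ (i : ℕ)) * exp (-s)) := by
  rw [gaussian_tail_integrand_comp_add hL.ne', sum_tailMajorantCoeff_mul_pow]
  gcongr
  exact quadratic_mul_exp_neg_sq_div_le hL hs

lemma rpow_neg_half_four_pi_mul_div_mul_sq {L : ℝ} (hL : 0 < L) (x : ℝ) :
    (4 * π * L) ^ (-(1 / 2) : ℝ) * x / (2 * L) * (20 * L ^ 2) = 5 / √π * x * √L := by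
  rw [rpow_neg (by positivity), ← sqrt_eq_rpow, sqrt_mul (by positivity), sqrt_mul (by norm_num),
    show (4 : ℝ) = 2 ^ 2 by norm_num, sqrt_sq (by norm_num)]
  have hsL : √L * √L = L := mul_self_sqrt hL.le
  have : 0 < √π := sqrt_pos.2 pi_pos
  have : 0 < √L := sqrt_pos.2 hL
  field_simp
  linear_combination (-20 * x) * hsL

theorem stmt18 (x : ℝ) (hx : 10 ^ 10 ≤ x) :
    (∫ t in Set.Ioi (4 * Real.log x),
      (4 * Real.pi * Real.log x) ^ (-(1/2) : ℝ) * Real.exp (-t ^ 2 / (4 * Real.log x))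
        * ((t + Real.log x) * t / (2 * Real.log x)) * (x * Real.exp t))
    ≤ (5 / Real.sqrt Real.pi) * x * Real.sqrt (Real.log x) := by
  have hx0 : 0 < x := lt_of_lt_of_le (by norm_num) hx
  have hL : 17 ≤ log x := by rw [le_log_iff_exp_le hx0]; linarith [exp_seventeen_lt]
  set L := log x
  have hL0 : 0 < L := by linarith
  set K := (4 * π * L) ^ (-(1 / 2) : ℝ)
  have hK : 0 ≤ K := by positivity
  rw [show Ioi (4 * L) = Ioi (0 + 4 * L) by rw [zero_add], ← integral_comp_add_right_Ioi]
  calc _ ≤ ∫ s in Ioi 0,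
          K * x / (2 * L) * ((∑ i, tailMajorantCoeff L i * s ^ (i : ℕ)) * exp (-s)) := by
        refine integral_mono_of_nonneg ?_
          ((integrableOn_Ioi_sum_mul_pow_mul_exp_neg _).const_mul _) ?_
        all_goals filter_upwards [ae_restrict_mem measurableSet_Ioi] with s (hs : 0 < s)
        · positivity
        · exact gaussian_tail_integrand_comp_add_le hK hx0.le hL0 hs.le
    _ = K * x / (2 * L) * (20 * L ^ 2 - L + 17) := by
        rw [integral_const_mul, integral_Ioi_sum_mul_pow_mul_exp_neg,
          sum_tailMajorantCoeff_mul_factorial]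
    _ ≤ K * x / (2 * L) * (20 * L ^ 2) := by gcongr; linarith
    _ = _ := rpow_neg_half_four_pi_mul_div_mul_sq hL0 x
end
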